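/- arXiv:1602.05890 — 3 statements merged into one kernel-verified Lean document; each statement's English description precedes it below -/
import Mathlib

section
/- Let G be a finite connected simple graph on vertex set [n]. Two vertices i and j belong to the same connected component of the linear relation graph Γ_G of the edge ideal I_G if and only if there is a walk of even length in G connecting i and j. -/
open MvPolynomial

/-- The edge ideal of a finite simple graph on `Fin n`: the ideal generated by the
monomials `X i * X j` with `{i,j}` an edge of `G`. -/
noncomputable def edgeIdeal (K : Type*) [Field K] {n : ℕ} (G : SimpleGraph (Fin n)) :
    Ideal (MvPolynomial (Fin n) K) :=
  Ideal.span {p | ∃ i j : Fin n, G.Adj i j ∧ p = X i * X j}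

/-- The graded maximal ideal `(x_1, …, x_n)` of the polynomial ring. -/
noncomputable def maxIdeal (K : Type*) [Field K] (n : ℕ) : Ideal (MvPolynomial (Fin n) K) :=
  Ideal.span (Set.range X)

/-- The depth of `S/I` with respect to the graded maximal ideal: the supremum of the
lengths of regular sequences on `S/I` consisting of elements of the maximal ideal. -/
noncomputable def quotDepth (K : Type*) [Field K] {n : ℕ}
    (I : Ideal (MvPolynomial (Fin n) K)) : ℕ :=
  sSup {k | ∃ rs : List (MvPolynomial (Fin n) K), rs.length = k ∧
    (∀ r ∈ rs, r ∈ maxIdeal K n) ∧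
    RingTheory.Sequence.IsRegular (MvPolynomial (Fin n) K ⧸ I) rs}

/-- `dstab I`: the smallest power from which on the depth of `S/I^k` stabilizes. -/
noncomputable def dstab (K : Type*) [Field K] {n : ℕ}
    (I : Ideal (MvPolynomial (Fin n) K)) : ℕ :=
  sInf {k | 1 ≤ k ∧ ∀ l, k ≤ l → quotDepth K (I ^ l) = quotDepth K (I ^ k)}

/-- `astab I`: the smallest power from which on the set of associated primes of
`S/I^k` stabilizes. -/
noncomputable def astab (K : Type*) [Field K] {n : ℕ}
    (I : Ideal (MvPolynomial (Fin n) K)) : ℕ :=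
  sInf {k | 1 ≤ k ∧ ∀ l, k ≤ l →
    associatedPrimes (MvPolynomial (Fin n) K) (MvPolynomial (Fin n) K ⧸ (I ^ l)) =
    associatedPrimes (MvPolynomial (Fin n) K) (MvPolynomial (Fin n) K ⧸ (I ^ k))}

/-- The analytic spread `ℓ(I)`: the Krull dimension of `R(I)/m R(I)`, where `R(I)` is
the Rees algebra of `I` and `m` the graded maximal ideal. -/
noncomputable def analyticSpread (K : Type*) [Field K] {n : ℕ}
    (I : Ideal (MvPolynomial (Fin n) K)) : WithBot (WithTop ℕ) :=
  ringKrullDim ((reesAlgebra I) ⧸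
    (Ideal.map (algebraMap (MvPolynomial (Fin n) K) (reesAlgebra I)) (maxIdeal K n)))

/-- The set of minimal monomial generators of a monomial ideal: the (monic) monomials
belonging to `I` but not to `m·I`. -/
def minimalMonGens (K : Type*) [Field K] {n : ℕ}
    (I : Ideal (MvPolynomial (Fin n) K)) : Set (MvPolynomial (Fin n) K) :=
  {u | (∃ s : Fin n →₀ ℕ, u = monomial s 1) ∧ u ∈ I ∧ u ∉ maxIdeal K n * I}

/-- The linear relation graph `Γ` of a monomial ideal `I`: the vertices `i` and `j`
are adjacent iff there are minimal monomial generators `u, v` of `I` with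
`x_i u = x_j v`. -/
noncomputable def linearRelationGraph (K : Type*) [Field K] {n : ℕ}
    (I : Ideal (MvPolynomial (Fin n) K)) : SimpleGraph (Fin n) where
  Adj i j := i ≠ j ∧ ∃ u ∈ minimalMonGens K I, ∃ v ∈ minimalMonGens K I,
    X i * u = X j * v
  symm := ⟨fun i j ⟨hij, u, hu, v, hv, h⟩ => ⟨hij.symm, v, hv, u, hu, h.symm⟩⟩
  loopless := ⟨fun i ⟨h, _⟩ => h rfl⟩

/-- A star graph: one vertex (the center) is adjacent to all other vertices and
there are no other edges. -/
def IsStarGraph {n : ℕ} (G : SimpleGraph (Fin n)) : Prop :=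
  ∃ c : Fin n, ∀ i j : Fin n, G.Adj i j ↔ (i = c ∧ j ≠ c) ∨ (j = c ∧ i ≠ c)

/-!
The minimal monomial generators of `I_G` are the monomials `x_a x_b` with `{a, b}` an edge: they
all have degree two, so their exponents form an antichain. A linear relation
`x_i (x_a x_b) = x_j (x_c x_d)` with `i ≠ j` forces `j ∈ {a, b}`, `i ∈ {c, d}` and a common third
vertex `m`, so `Γ` is the graph joining distinct vertices that have a common neighbour in `G`.
Paths in that graph are exactly even walks in `G`, read two steps at a time.
-/

theorem Multiset.exists_sym2_eq_of_cons_pair_eq {α : Type*} {i j a b c d : α} (hij : i ≠ j)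
    (h : i ::ₘ {a, b} = j ::ₘ {c, d}) : ∃ m, s(a, b) = s(j, m) ∧ s(c, d) = s(i, m) := by
  simp only [Multiset.insert_eq_cons, Multiset.cons_eq_cons, Multiset.singleton_eq_cons_iff, hij,
    false_and, ne_eq, not_false_eq_true, true_and, false_or] at h
  simp only [Sym2.eq_iff]
  aesop

namespace Finsupp

variable {σ : Type*}

theorem exists_single_add_le_of_lt {s t : σ →₀ ℕ} (h : s < t) : ∃ c, single c 1 + s ≤ t := by
  obtain ⟨c, hc⟩ : ∃ c, s c < t c := by
    by_contra! hle
    exact h.not_ge hle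
  refine ⟨c, fun x => ?_⟩
  by_cases hx : c = x
  · subst hx; simpa [Nat.one_add] using hc
  · simpa [single_apply, hx] using h.le x

theorem isAntichain_of_degree_eq {S : Set (σ →₀ ℕ)} {d : ℕ} (hS : ∀ s ∈ S, s.degree = d) :
    IsAntichain (· ≤ ·) S := by
  intro s hs t ht hne hle
  obtain ⟨u, rfl⟩ := le_iff_exists_add.mp hle
  have : u.degree = 0 := by simpa [hS s hs] using hS _ ht
  simp [(degree_eq_zero_iff u).mp this] at hne

end Finsupp

namespace SimpleGraph

variable {V : Type*} (G : SimpleGraph V)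

def twoStepGraph : SimpleGraph V := fromRel fun u v => ∃ m, G.Adj u m ∧ G.Adj m v

variable {G}

theorem twoStepGraph_adj {u v : V} :
    G.twoStepGraph.Adj u v ↔ u ≠ v ∧ ∃ m, G.Adj u m ∧ G.Adj m v := by
  simp only [twoStepGraph, fromRel_adj, and_congr_right_iff]
  exact fun _ => or_iff_left_of_imp fun ⟨m, hvm, hmu⟩ => ⟨m, hmu.symm, hvm.symm⟩

/-- The odd clause is what makes the induction go through: prepending an edge to an odd walk
gives an even one. -/
theorem Walk.reachable_twoStepGraph_of_parity {u v : V} (w : G.Walk u v) :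
    (Even w.length → G.twoStepGraph.Reachable u v) ∧
      (Odd w.length → ∀ t, G.Adj t u → G.twoStepGraph.Reachable t v) := by
  induction w with
  | nil => simp
  | @cons u x v hux p ih =>
    simp only [length_cons, Nat.even_add_one, Nat.odd_add_one, Nat.not_odd_iff_even,
      Nat.not_even_iff_odd]
    refine ⟨fun hp => ih.2 hp u hux, fun hp t htu => ?_⟩
    obtain rfl | htx := eq_or_ne t x
    · exact ih.1 hp
    · exact (twoStepGraph_adj.mpr ⟨htx, u, htu, hux⟩).reachable.trans (ih.1 hp)

theorem reachable_twoStepGraph_iff {u v : V} :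
    G.twoStepGraph.Reachable u v ↔ ∃ w : G.Walk u v, Even w.length := by
  refine ⟨?_, fun ⟨w, hw⟩ => w.reachable_twoStepGraph_of_parity.1 hw⟩
  rintro ⟨p⟩
  induction p with
  | nil => exact ⟨.nil, .zero⟩
  | cons hadj _ ih =>
    obtain ⟨w, hw⟩ := ih
    obtain ⟨-, m, hum, hmx⟩ := twoStepGraph_adj.mp hadj
    exact ⟨.cons hum (.cons hmx w), by simpa [Nat.even_add_one] using hw⟩

theorem exists_adj_adj_of_cons_pair_eq {G : SimpleGraph V} {i j a b c d : V} (hij : i ≠ j)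
    (hab : G.Adj a b) (hcd : G.Adj c d) (h : i ::ₘ {a, b} = j ::ₘ {c, d}) :
    ∃ m, G.Adj i m ∧ G.Adj m j := by
  obtain ⟨m, hjm, him⟩ := Multiset.exists_sym2_eq_of_cons_pair_eq hij h
  rw [← mem_edgeSet, hjm, mem_edgeSet] at hab
  rw [← mem_edgeSet, him, mem_edgeSet] at hcd
  exact ⟨m, hcd, hab.symm⟩

end SimpleGraph

section EdgeIdeal

open Finsupp

variable {K : Type*} [Field K] {n : ℕ}

theorem linearRelationGraph_adj {I : Ideal (MvPolynomial (Fin n) K)} {i j : Fin n} :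
    (linearRelationGraph K I).Adj i j ↔
      i ≠ j ∧ ∃ u ∈ minimalMonGens K I, ∃ v ∈ minimalMonGens K I, X i * u = X j * v :=
  Iff.rfl

theorem X_mul_monomial_one (c : Fin n) (s : Fin n →₀ ℕ) :
    (X c * monomial s 1 : MvPolynomial (Fin n) K) = monomial (single c 1 + s) 1 := by
  rw [X, monomial_mul, one_mul]

theorem maxIdeal_mul_span_monomial (S : Set (Fin n →₀ ℕ)) :
    maxIdeal K n * Ideal.span ((fun s => monomial s (1 : K)) '' S) =
      Ideal.span ((fun s => monomial s 1) '' {t | ∃ c, ∃ s ∈ S, single c 1 + s = t}) := by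
  rw [maxIdeal, Ideal.span_mul_span']
  congr 1
  ext p
  simp only [Set.mem_mul, Set.mem_range, Set.mem_image, Set.mem_ofPred_eq]
  constructor
  · rintro ⟨_, ⟨c, rfl⟩, _, ⟨s, hs, rfl⟩, rfl⟩
    exact ⟨_, ⟨c, s, hs, rfl⟩, (X_mul_monomial_one c s).symm⟩
  · rintro ⟨_, ⟨c, s, hs, rfl⟩, rfl⟩
    exact ⟨_, ⟨c, rfl⟩, _, ⟨s, hs, rfl⟩, X_mul_monomial_one c s⟩

theorem minimalMonGens_span_monomial {S : Set (Fin n →₀ ℕ)} (hS : IsAntichain (· ≤ ·) S) :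
    minimalMonGens K (Ideal.span ((fun s => monomial s (1 : K)) '' S)) =
      (fun s => monomial s 1) '' S := by
  ext u
  simp only [minimalMonGens, maxIdeal_mul_span_monomial, Set.mem_ofPred_eq]
  constructor
  · rintro ⟨⟨t, rfl⟩, hI, hmI⟩
    obtain ⟨s, hs, hst⟩ := mem_ideal_span_monomial_image.mp hI t (by simp)
    refine ⟨t, ?_, rfl⟩
    obtain rfl | hlt := hst.eq_or_lt
    · exact hs
    obtain ⟨c, hc⟩ := exists_single_add_le_of_lt hlt
    refine absurd (mem_ideal_span_monomial_image.mpr fun x hx => ?_) hmI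
    obtain rfl : t = x := by simpa using hx
    exact ⟨_, ⟨c, s, hs, rfl⟩, hc⟩
  · rintro ⟨t, ht, rfl⟩
    refine ⟨⟨t, rfl⟩, Ideal.subset_span ⟨t, ht, rfl⟩, fun hmI => ?_⟩
    obtain ⟨_, ⟨c, s, hs, rfl⟩, hle⟩ := mem_ideal_span_monomial_image.mp hmI t (by simp)
    obtain rfl : s = t := hS.eq hs ht (le_add_self.trans hle)
    simp at hle

def edgeExponents (G : SimpleGraph (Fin n)) : Set (Fin n →₀ ℕ) :=
  {s | ∃ a b, G.Adj a b ∧ single a 1 + single b 1 = s}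

variable (G : SimpleGraph (Fin n))

theorem edgeIdeal_eq_span_monomial :
    edgeIdeal K G = Ideal.span ((fun s => monomial s (1 : K)) '' edgeExponents G) := by
  rw [edgeIdeal]
  congr 1
  ext p
  simp only [edgeExponents, Set.mem_image, Set.mem_ofPred_eq]
  constructor
  · rintro ⟨a, b, hab, rfl⟩
    exact ⟨_, ⟨a, b, hab, rfl⟩, by rw [X, X, monomial_mul, one_mul]⟩
  · rintro ⟨_, ⟨a, b, hab, rfl⟩, rfl⟩
    exact ⟨a, b, hab, by rw [X, X, monomial_mul, one_mul]⟩

theorem minimalMonGens_edgeIdeal :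
    minimalMonGens K (edgeIdeal K G) = (fun s => monomial s 1) '' edgeExponents G := by
  rw [edgeIdeal_eq_span_monomial]
  refine minimalMonGens_span_monomial (isAntichain_of_degree_eq (d := 2) ?_)
  rintro _ ⟨a, b, -, rfl⟩
  simp

theorem linearRelationGraph_edgeIdeal :
    linearRelationGraph K (edgeIdeal K G) = G.twoStepGraph := by
  ext i j
  rw [SimpleGraph.twoStepGraph_adj, linearRelationGraph_adj, minimalMonGens_edgeIdeal]
  refine and_congr_right fun hij => ⟨?_, ?_⟩
  · rintro ⟨_, ⟨_, ⟨a, b, hab, rfl⟩, rfl⟩, _, ⟨_, ⟨c, d, hcd, rfl⟩, rfl⟩, h⟩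
    rw [X_mul_monomial_one, X_mul_monomial_one] at h
    have := congrArg toMultiset (monomial_left_injective one_ne_zero h)
    simp only [map_add, toMultiset_single, one_nsmul, Multiset.singleton_add] at this
    exact G.exists_adj_adj_of_cons_pair_eq hij hab hcd this
  · rintro ⟨m, him, hmj⟩
    refine ⟨_, ⟨_, ⟨j, m, hmj.symm, rfl⟩, rfl⟩, _, ⟨_, ⟨i, m, him, rfl⟩, rfl⟩, ?_⟩
    rw [X_mul_monomial_one, X_mul_monomial_one, add_left_comm]

end EdgeIdeal

theorem stmt1_general (K : Type*) [Field K] {n : ℕ} (G : SimpleGraph (Fin n))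
    (i j : Fin n) :
    (linearRelationGraph K (edgeIdeal K G)).Reachable i j ↔
      ∃ w : G.Walk i j, Even w.length := by
  rw [linearRelationGraph_edgeIdeal, SimpleGraph.reachable_twoStepGraph_iff]

/-- in a connected graph `G`, two vertices lie in the same connected
component of the linear relation graph of `I_G` iff there is a walk of even length
in `G` connecting them. -/
theorem stmt1 (K : Type*) [Field K] {n : ℕ} (G : SimpleGraph (Fin n))
    (hconn : G.Connected) (i j : Fin n) :
    (linearRelationGraph K (edgeIdeal K G)).Reachable i j ↔
      ∃ w : G.Walk i j, Even w.length :=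
  stmt1_general K G i j
end

section
/- Let G be a finite connected simple graph on vertex set [n] which is non-bipartite. Then the linear relation graph Γ_G of the edge ideal I_G has exactly n vertices and is connected (i.e., has exactly 1 connected component). -/
open MvPolynomial

/-!
If `c` is a common neighbour of `a` and `b` in `G`, then `x_a (x_b x_c) = x_b (x_a x_c)` is a
linear relation between minimal generators of `I_G`, so `Γ` contains the common-neighbour graph
of `G`. Two vertices are connected in the latter as soon as they are joined by a walk of even
length in `G`, and in a connected non-bipartite graph any two vertices are: if the obvious walk
is odd, route it through an odd closed walk.
-/

namespace SimpleGraph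

variable {V : Type*} (G : SimpleGraph V)

def commonNeighborGraph : SimpleGraph V where
  Adj a b := a ≠ b ∧ (G.commonNeighbors a b).Nonempty
  symm := ⟨fun a b h => ⟨h.1.symm, G.commonNeighbors_symm a b ▸ h.2⟩⟩

variable {G}

lemma reachable_commonNeighborGraph_of_adj_of_adj {a b c : V} (ha : G.Adj a c)
    (hb : G.Adj b c) : G.commonNeighborGraph.Reachable a b := by
  rcases eq_or_ne a b with rfl | hab
  · rfl
  · exact Adj.reachable ⟨hab, c, ha, hb⟩

lemma Walk.reachable_commonNeighborGraph_of_even_length {a b : V} :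
    ∀ w : G.Walk a b, Even w.length → G.commonNeighborGraph.Reachable a b
  | .nil, _ => .rfl
  | .cons _ .nil, he => by simp at he
  | .cons h (.cons h' w), he =>
    (reachable_commonNeighborGraph_of_adj_of_adj h h'.symm).trans
      (w.reachable_commonNeighborGraph_of_even_length (by simpa [Nat.even_add_one] using he))

lemma Connected.exists_walk_even_length (hconn : G.Connected) (hnb : ¬ G.Colorable 2)
    (a b : V) : ∃ w : G.Walk a b, Even w.length := by
  obtain ⟨u, c, hc⟩ : ∃ u, ∃ c : G.Walk u u, Odd c.length := by
    simpa [two_colorable_iff_forall_loop_even] using hnb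
  obtain ⟨p⟩ := hconn a u
  obtain ⟨q⟩ := hconn u b
  by_cases hpq : Even (p.append q).length
  · exact ⟨_, hpq⟩
  · refine ⟨p.append (c.append q), ?_⟩
    simp only [Walk.length_append] at hpq ⊢
    grind

lemma Connected.connected_commonNeighborGraph (hconn : G.Connected) (hnb : ¬ G.Colorable 2) :
    G.commonNeighborGraph.Connected := by
  have : Nonempty V := hconn.nonempty
  refine ⟨fun a b => ?_⟩
  obtain ⟨w, hw⟩ := hconn.exists_walk_even_length hnb a b
  exact w.reachable_commonNeighborGraph_of_even_length hw

lemma nontrivial_of_not_colorable_two (hnb : ¬ G.Colorable 2) : Nontrivial V := by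
  by_contra h
  rw [not_nontrivial_iff_subsingleton] at h
  exact hnb ⟨Coloring.mk (fun _ => 0) fun hab _ => G.ne_of_adj hab (Subsingleton.elim _ _)⟩

end SimpleGraph

section EdgeIdeal

variable {K : Type*} [Field K] {n : ℕ}

lemma X_mul_X_mem_maxIdeal_sq (i j : Fin n) :
    (X i * X j : MvPolynomial (Fin n) K) ∈ maxIdeal K n ^ 2 :=
  pow_two (maxIdeal K n) ▸
    Ideal.mul_mem_mul (Ideal.subset_span ⟨i, rfl⟩) (Ideal.subset_span ⟨j, rfl⟩)

lemma edgeIdeal_le_maxIdeal_sq (G : SimpleGraph (Fin n)) : edgeIdeal K G ≤ maxIdeal K n ^ 2 := by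
  rw [edgeIdeal, Ideal.span_le]
  rintro _ ⟨i, j, -, rfl⟩
  exact X_mul_X_mem_maxIdeal_sq i j

lemma X_mul_X_notMem_maxIdeal_pow_three (i j : Fin n) :
    (X i * X j : MvPolynomial (Fin n) K) ∉ maxIdeal K n ^ 3 := by
  rw [maxIdeal, ← idealOfVars, mem_pow_idealOfVars_iff']
  intro h
  have := h (Finsupp.single i 1 + Finsupp.single j 1) (by simp [Finsupp.degree_single])
  simp [X, monomial_mul] at this

lemma X_mul_X_mem_minimalMonGens {G : SimpleGraph (Fin n)} {i j : Fin n} (h : G.Adj i j) :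
    (X i * X j : MvPolynomial (Fin n) K) ∈ minimalMonGens K (edgeIdeal K G) := by
  refine ⟨⟨Finsupp.single i 1 + Finsupp.single j 1, by simp [X, monomial_mul]⟩,
    Ideal.subset_span ⟨i, j, h, rfl⟩,
    fun hmem => X_mul_X_notMem_maxIdeal_pow_three (K := K) i j ?_⟩
  rw [pow_succ']
  exact Ideal.mul_mono_right (edgeIdeal_le_maxIdeal_sq G) hmem

variable (K) in
lemma commonNeighborGraph_le_linearRelationGraph (G : SimpleGraph (Fin n)) :
    G.commonNeighborGraph ≤ linearRelationGraph K (edgeIdeal K G) := by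
  rintro a b ⟨hab, c, hac, hbc⟩
  exact ⟨hab, _, X_mul_X_mem_minimalMonGens hbc, _, X_mul_X_mem_minimalMonGens hac, by ring⟩

end EdgeIdeal

/-- if `G` is connected and non-bipartite, then the linear relation
graph of `I_G` has all `n` vertices and is connected. -/
theorem stmt3 (K : Type*) [Field K] {n : ℕ} (G : SimpleGraph (Fin n))
    (hconn : G.Connected) (hnb : ¬ G.Colorable 2) :
    (linearRelationGraph K (edgeIdeal K G)).support = Set.univ ∧
    (linearRelationGraph K (edgeIdeal K G)).Connected := by
  have hΓ := (hconn.connected_commonNeighborGraph hnb).mono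
    (commonNeighborGraph_le_linearRelationGraph K G)
  have := SimpleGraph.nontrivial_of_not_colorable_two hnb
  exact ⟨hΓ.preconnected.support_eq_univ, hΓ⟩
end

section
/- Let G be a tree on vertex set [n] such that vertex 1 has degree 1 and vertex 2 is its unique neighbor, and let I_G ⊂ S = K[x_1,...,x_n] be its edge ideal. Then x_1 - x_2 is a non-zerodivisor on S/I_G^k for every k ≥ 1. -/
open MvPolynomial

/-!
Since `I_G^k` is a monomial ideal, it suffices to show that every monomial `x^u` of `g` lies
in it. If `x_1 x^u ∉ I_G^k`, the coefficient of `x_1 x^u` in `(x_1 - x_2) g` vanishes, so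
`x^u x_1 / x_2` is again a monomial of `g`. Walking along `u + ℤ (e_1 - e_2)` in both directions produces `w ≤ u`
and `m` with `x_1^m x^w, x_2^m x^w ∈ I_G^k`.

For a forest, `I_G^k` is the intersection of the powers `P_C^k` of the primes of the vertex covers
`C`: `x^w ∈ I_G^k` iff `∑_{i ∈ C} w_i ≥ k` for every cover `C` (a capacitated König theorem,
proved by peeling off leaf edges). As `1` is a leaf at `2`, every cover contains a cover missing
`1` or missing `2`, and on it `w` has the same weight as `w + m e_1` or as `w + m e_2`.
-/

theorem Finsupp.finsetSum_single_apply {α M : Type*} [AddCommMonoid M] [DecidableEq α]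
    (s : Finset α) (a : α) (m : M) : ∑ i ∈ s, Finsupp.single a m i = if a ∈ s then m else 0 := by
  simp [Finsupp.single_apply]

open Finsupp (single single_le_iff single_add single_apply single_eq_same single_eq_of_ne' coe_tsub
  finsetSum_single_apply)

namespace SimpleGraph

variable {V : Type*} {G H : SimpleGraph V}

variable (G) in
def edgeExponents : Set (V →₀ ℕ) := {d | ∃ i j, G.Adj i j ∧ d = single i 1 + single j 1}

variable (G) in
open Pointwise in
def edgePowExponents : ℕ → Set (V →₀ ℕ)
  | 0 => {0}
  | k + 1 => edgePowExponents k + G.edgeExponents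

theorem edgePowExponents_mono (hGH : G ≤ H) : ∀ k, G.edgePowExponents k ⊆ H.edgePowExponents k
  | 0 => subset_rfl
  | k + 1 => Set.add_subset_add (edgePowExponents_mono hGH k)
      (by rintro _ ⟨i, j, hij, rfl⟩; exact ⟨i, j, hGH hij, rfl⟩)

theorem le_sum_of_mem_edgePowExponents {C : Finset V} (hC : G.IsVertexCover C) :
    ∀ {k : ℕ} {d : V →₀ ℕ}, d ∈ G.edgePowExponents k → k ≤ ∑ x ∈ C, d x
  | 0, _, _ => Nat.zero_le _
  | k + 1, _, ⟨d, hd, _, ⟨i, j, hij, rfl⟩, rfl⟩ => by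
    classical
    have hd := le_sum_of_mem_edgePowExponents hC hd
    have hij : i ∈ C ∨ j ∈ C := hC hij
    have hedge : 1 ≤ (if i ∈ C then 1 else 0) + (if j ∈ C then 1 else 0) := by
      split_ifs <;> simp_all
    simp only [Finsupp.coe_add, Pi.add_apply, Finset.sum_add_distrib, finsetSum_single_apply]
    omega

theorem IsAcyclic.exists_leaf [Finite V] (hG : G.IsAcyclic) {a b : V} (hab : G.Adj a b) :
    ∃ ℓ p, G.Adj ℓ p ∧ ∀ q, G.Adj ℓ q → q = p := by
  have : Nonempty V := ⟨a⟩
  obtain ⟨u, v, P, hP, hmax⟩ := Walk.exists_isPath_forall_isPath_length_le_length G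
  have hnil : ¬ P.Nil := fun h => by
    simpa [h.length_eq_zero] using hmax a b (.cons hab .nil) (by simp [hab.ne])
  refine ⟨u, P.snd, P.adj_snd hnil, fun q hq => hG.eq_snd_of_adj_start hP hq ?_⟩
  by_contra hqP
  simpa using hmax _ _ (P.cons hq.symm) (hP.cons hqP)

theorem IsVertexCover.exists_subset_notMem_or {C : Finset V} (hC : G.IsVertexCover C)
    {ℓ p : V} (hleaf : ∀ q, G.Adj ℓ q → q = p) :
    ∃ C' ⊆ C, G.IsVertexCover C' ∧ (ℓ ∉ C' ∨ p ∉ C') := by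
  classical
  by_cases hℓp : ℓ ∈ C ∧ p ∈ C
  · refine ⟨C.erase ℓ, C.erase_subset ℓ, fun u v huv => ?_, .inl (C.notMem_erase ℓ)⟩
    simp only [Finset.coe_erase, Set.mem_sdiff, Finset.mem_coe, Set.mem_singleton_iff]
    by_cases hu : u = ℓ
    · subst hu; have := hleaf v huv; subst this; exact .inr ⟨hℓp.2, huv.ne'⟩
    by_cases hv : v = ℓ
    · subst hv; have := hleaf u huv.symm; subst this; exact .inl ⟨hℓp.2, huv.ne⟩
    exact (hC huv).imp (⟨·, hu⟩) (⟨·, hv⟩)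
  · exact ⟨C, subset_rfl, hC, by tauto⟩

theorem IsVertexCover.insert_of_deleteEdges {e : Sym2 V} {c : Set V}
    (hc : (G.deleteEdges {e}).IsVertexCover c) {x : V} (hx : x ∈ e) :
    G.IsVertexCover (insert x c) := by
  intro u v huv
  by_cases he : s(u, v) = e
  · subst he
    rcases Sym2.mem_iff.1 hx with rfl | rfl <;> simp
  · exact (hc ((deleteEdges_adj ..).2 ⟨huv, he⟩)).imp
      (Set.mem_insert_of_mem x) (Set.mem_insert_of_mem x)

theorem IsVertexCover.le_sum_tsub_of_leaf {C : Finset V} (hC : G.IsVertexCover C) {ℓ p : V}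
    (hleaf : ∀ q, G.Adj ℓ q → q = p) {k : ℕ} {w : V →₀ ℕ}
    (hw : ∀ C : Finset V, G.IsVertexCover C → k + 1 ≤ ∑ i ∈ C, w i)
    (hχw : single ℓ 1 + single p 1 ≤ w) :
    k ≤ ∑ i ∈ C, (w - (single ℓ 1 + single p 1) : V →₀ ℕ) i := by
  classical
  set χ := single ℓ 1 + single p 1
  obtain ⟨C', hC'C, hC', hmiss⟩ := hC.exists_subset_notMem_or hleaf
  have hsum : ∑ i ∈ C', w i = ∑ i ∈ C', (w - χ) i + ∑ i ∈ C', χ i := by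
    rw [← Finset.sum_add_distrib]; simp [tsub_add_cancel_of_le (hχw _)]
  have hχ : ∑ i ∈ C', χ i ≤ 1 := by
    simp only [χ, Finsupp.coe_add, Pi.add_apply, Finset.sum_add_distrib, finsetSum_single_apply]
    split_ifs <;> tauto
  have := hw C' hC'
  have := Finset.sum_le_sum_of_subset (f := ⇑(w - χ)) hC'C
  omega

theorem IsAcyclic.mem_upperClosure_edgePowExponents [Finite V] (hG : G.IsAcyclic) {k : ℕ}
    {w : V →₀ ℕ} (hw : ∀ C : Finset V, G.IsVertexCover C → k ≤ ∑ i ∈ C, w i) :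
    w ∈ upperClosure (G.edgePowExponents k) := by
  classical
  induction hN : k + G.edgeSet.ncard using Nat.strong_induction_on generalizing k G w with
  | _ N ih =>
  subst hN
  cases k with
  | zero => exact ⟨0, rfl, zero_le⟩
  | succ k =>
  obtain ⟨a, b, hab⟩ : ∃ a b, G.Adj a b := by
    by_contra! h
    simpa using hw ∅ fun u v huv => (h u v huv).elim
  obtain ⟨ℓ, p, hℓp, hleaf⟩ := hG.exists_leaf hab
  -- Either the leaf edge `ℓp` can be deleted for free, or it is used once.
  by_cases hzero : ∃ x ∈ s(ℓ, p), w x = 0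
  · obtain ⟨x, hx, hwx⟩ := hzero
    have hle := G.deleteEdges_le {s(ℓ, p)}
    have hcard : (G.deleteEdges {s(ℓ, p)}).edgeSet.ncard < G.edgeSet.ncard := by
      rw [edgeSet_deleteEdges]
      exact Set.ncard_sdiff_singleton_lt_of_mem hℓp
    obtain ⟨d, hd, hdw⟩ := ih _ (by omega) (hG.anti hle) (k := k + 1) (fun C hC => by
      simpa [Finset.sum_insert_of_eq_zero_if_notMem, hwx] using
        hw (insert x C) (by simpa using hC.insert_of_deleteEdges hx)) rfl
    exact ⟨d, edgePowExponents_mono hle _ hd, hdw⟩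
  · push Not at hzero
    set χ := single ℓ 1 + single p 1
    have hχw : χ ≤ w := fun x => by
      have := hzero ℓ (by simp); have := hzero p (by simp)
      simp only [χ, Finsupp.coe_add, Pi.add_apply, single_apply]
      split_ifs <;> subst_vars <;> first | omega | exact absurd rfl hℓp.ne
    obtain ⟨d, hd, hdw⟩ :=
      ih (k + G.edgeSet.ncard) (by omega) hG (fun C hC => hC.le_sum_tsub_of_leaf hleaf hw hχw) rfl
    exact ⟨d + χ, Set.add_mem_add hd ⟨ℓ, p, hℓp, rfl⟩,
      tsub_add_cancel_of_le hχw ▸ add_le_add_left hdw χ⟩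

theorem IsAcyclic.mem_upperClosure_edgePowExponents_of_leaf [Finite V] (hG : G.IsAcyclic)
    {ℓ p : V} (hleaf : ∀ q, G.Adj ℓ q → q = p) {k m : ℕ} {w : V →₀ ℕ}
    (hℓ : w + single ℓ m ∈ upperClosure (G.edgePowExponents k))
    (hp : w + single p m ∈ upperClosure (G.edgePowExponents k)) :
    w ∈ upperClosure (G.edgePowExponents k) := by
  classical
  refine hG.mem_upperClosure_edgePowExponents fun C hC => ?_
  obtain ⟨C', hC'C, hC', hmiss⟩ := hC.exists_subset_notMem_or hleaf
  have key : ∀ x ∉ C', w + single x m ∈ upperClosure (G.edgePowExponents k) →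
      k ≤ ∑ i ∈ C', w i := by
    rintro x hx ⟨d, hd, hdw⟩
    calc k ≤ ∑ i ∈ C', d i := le_sum_of_mem_edgePowExponents hC' hd
      _ ≤ ∑ i ∈ C', (w + single x m) i := Finset.sum_le_sum fun i _ => hdw i
      _ = ∑ i ∈ C', w i := by simp [Finset.sum_add_distrib, finsetSum_single_apply, hx]
  calc k ≤ ∑ i ∈ C', w i := hmiss.elim (key ℓ · hℓ) (key p · hp)
    _ ≤ ∑ i ∈ C, w i := Finset.sum_le_sum_of_subset hC'C

end SimpleGraph

section MonomialIdeal

variable {σ R : Type*} [CommRing R] {S : Set (σ →₀ ℕ)} {a b : σ} {g : MvPolynomial σ R}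
  {u : σ →₀ ℕ}

theorem exists_mem_support_add_single_eq
    (hg : (X a - X b) * g ∈ Ideal.span ((monomial · (1 : R)) '' S)) (hu : u ∈ g.support)
    (hua : u + single a 1 ∉ upperClosure S) :
    ∃ u' ∈ g.support, u' + single b 1 = u + single a 1 := by
  classical
  have hcoeff : coeff (u + single a 1) ((X a - X b) * g) = 0 := by
    by_contra h
    exact hua (mem_ideal_span_monomial_image.1 hg _ (mem_support_iff.2 h))
  rw [sub_mul, coeff_sub, add_comm, coeff_X_mul, coeff_X_mul', add_comm] at hcoeff
  split_ifs at hcoeff with hb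
  · refine ⟨_, mem_support_iff.2 ?_, tsub_add_cancel_of_le (single_le_iff.2 ?_)⟩
    · rw [← sub_eq_zero.1 hcoeff]; exact mem_support_iff.1 hu
    · exact Nat.one_le_iff_ne_zero.2 (Finsupp.mem_support_iff.1 hb)
  · exact absurd (sub_zero (coeff u g) ▸ hcoeff) (mem_support_iff.1 hu)

theorem exists_add_single_mem_upperClosure (hab : a ≠ b)
    (hg : (X a - X b) * g ∈ Ideal.span ((monomial · (1 : R)) '' S)) (hu : u ∈ g.support) :
    ∃ t v, v + single b t = u + single a t ∧ v + single a 1 ∈ upperClosure S := by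
  induction hN : u b using Nat.strong_induction_on generalizing u with
  | _ N ih =>
  subst hN
  by_cases hua : u + single a 1 ∈ upperClosure S
  · exact ⟨0, u, by simp, hua⟩
  obtain ⟨u', hu', hu'u⟩ := exists_mem_support_add_single_eq hg hu hua
  have hlt : u' b < u b := by
    have := DFunLike.congr_fun hu'u b
    simp only [Finsupp.coe_add, Pi.add_apply, single_eq_same, single_eq_of_ne' hab] at this
    omega
  obtain ⟨t, v, hv, hvS⟩ := ih _ hlt hu' rfl
  refine ⟨t + 1, v, ?_, hvS⟩
  calc v + single b (t + 1) = v + single b t + single b 1 := by rw [single_add, add_assoc]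
    _ = u' + single b 1 + single a t := by rw [hv, add_right_comm]
    _ = u + single a (t + 1) := by rw [hu'u, add_assoc, ← single_add, add_comm 1 t]

theorem exists_le_add_single_mem_upperClosure (hab : a ≠ b)
    (hg : (X a - X b) * g ∈ Ideal.span ((monomial · (1 : R)) '' S)) (hu : u ∈ g.support) :
    ∃ w ≤ u, ∃ m, w + single a m ∈ upperClosure S ∧ w + single b m ∈ upperClosure S := by
  classical
  have hg' : (X b - X a) * g ∈ Ideal.span ((monomial · (1 : R)) '' S) := by
    rw [← neg_sub, neg_mul]; exact neg_mem hg
  obtain ⟨t, v, hv, hvS⟩ := exists_add_single_mem_upperClosure hab hg hu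
  obtain ⟨s, v', hv', hv'S⟩ := exists_add_single_mem_upperClosure hab.symm hg' hu
  refine ⟨u - single a s - single b t, tsub_le_self.trans tsub_le_self, s + t + 1,
    (upperClosure S).upper (fun x => ?_) hvS, (upperClosure S).upper (fun x => ?_) hv'S⟩ <;>
  · have h := DFunLike.congr_fun hv x
    have h' := DFunLike.congr_fun hv' x
    simp only [Finsupp.coe_add, coe_tsub, Pi.add_apply, Pi.sub_apply, single_apply] at h h' ⊢
    split_ifs at h h' ⊢ <;> subst_vars <;> omega

end MonomialIdeal

section EdgeIdeal

variable {σ R : Type*} [CommSemiring R]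

open Pointwise in
theorem image_monomial_add (A B : Set (σ →₀ ℕ)) :
    (monomial · (1 : R)) '' (A + B) = (monomial · (1 : R)) '' A * (monomial · (1 : R)) '' B := by
  simp only [← Set.image2_add, ← Set.image2_mul]
  exact Set.image_image2_distrib fun _ _ => by rw [monomial_mul, one_mul]

variable (K : Type*) [Field K] {n : ℕ} (G : SimpleGraph (Fin n))

theorem edgeIdeal_eq_span :
    edgeIdeal K G = Ideal.span ((monomial · (1 : K)) '' G.edgeExponents) := by
  rw [edgeIdeal]
  congr 1
  ext f
  simp [SimpleGraph.edgeExponents, X, monomial_mul, eq_comm]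

theorem edgeIdeal_pow_eq_span (k : ℕ) :
    edgeIdeal K G ^ k = Ideal.span ((monomial · (1 : K)) '' G.edgePowExponents k) := by
  induction k with
  | zero => simp [SimpleGraph.edgePowExponents]
  | succ k ih =>
    rw [pow_succ, ih, edgeIdeal_eq_span, Ideal.span_mul_span', ← image_monomial_add]
    rfl

end EdgeIdeal

/-- for a tree `G` in which the first vertex is a leaf with unique
neighbor the second vertex, `x_1 - x_2` is a non-zerodivisor on `S/I_G^k` for all
`k ≥ 1`. -/
theorem stmt14 (K : Type*) [Field K] {n : ℕ} (hn : 2 ≤ n) (G : SimpleGraph (Fin n))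
    (hacyc : G.IsAcyclic)
    (hleaf : G.neighborSet ⟨0, by omega⟩ = {(⟨1, by omega⟩ : Fin n)}) :
    ∀ k : ℕ, 1 ≤ k → ∀ g : MvPolynomial (Fin n) K,
      (X (⟨0, by omega⟩ : Fin n) - X (⟨1, by omega⟩ : Fin n)) * g ∈ (edgeIdeal K G) ^ k →
      g ∈ (edgeIdeal K G) ^ k := by
  intro k _ g hg
  have hnbr q : G.Adj ⟨0, by omega⟩ q ↔ q = ⟨1, by omega⟩ := Set.ext_iff.1 hleaf q
  rw [edgeIdeal_pow_eq_span] at hg ⊢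
  rw [mem_ideal_span_monomial_image]
  intro u hu
  obtain ⟨w, hwu, m, h0, h1⟩ :=
    exists_le_add_single_mem_upperClosure ((hnbr _).2 rfl).ne hg hu
  exact (upperClosure _).upper hwu
    (hacyc.mem_upperClosure_edgePowExponents_of_leaf (fun q => (hnbr q).1) h0 h1)
end
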